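/- arXiv:1607.03482 — 2 statements merged into one kernel-verified Lean document; each statement's English description precedes it below -/
import Mathlib

section
/- Let the electromagnetic field have the split form E(t,x) = ε⊥(ct − x³) + E_s(x), B(t,x) = k × ε⊥(ct − x³) + B_s(x) with ε⊥ : ℝ → ℝ³ continuous with vanishing third component, B_s continuous, and E_s = −∇A_s⁰ for a C¹ function A_s⁰ : ℝ³ → ℝ. Let (x,p) be a C¹ solution of the Lorentz equations, with ξ-parametrized variables x̂, γ̂. Then the energy Ĥ(ξ) := mc²γ̂(ξ) + qA_s⁰(x̂(ξ)) satisfies Ĥ'(ξ) = q·[(x̂¹)'(ξ)·ε¹(ξ) + (x̂²)'(ξ)·ε²(ξ)] for all ξ in the range of ξ(t) = ct − x³(t). In particular, on any interval where ε⊥ vanishes identically, Ĥ is constant. -/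
noncomputable section

/-- Squared Euclidean norm on `Fin 3 → ℝ`. -/
def sq3 (v : Fin 3 → ℝ) : ℝ := v 0 ^ 2 + v 1 ^ 2 + v 2 ^ 2

/-- Cross product on `Fin 3 → ℝ`. -/
def cross (a b : Fin 3 → ℝ) : Fin 3 → ℝ :=
  ![a 1 * b 2 - a 2 * b 1, a 2 * b 0 - a 0 * b 2, a 0 * b 1 - a 1 * b 0]

/-- `(x, p)` is a C¹ solution of the Lorentz equations
`p' = qE + (p/√(m²c²+‖p‖²)) × qB`, `x' = c·p/√(m²c²+‖p‖²)`. -/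
def IsLorentzSolution (m c q : ℝ) (E B : ℝ → (Fin 3 → ℝ) → (Fin 3 → ℝ))
    (x p : ℝ → Fin 3 → ℝ) : Prop :=
  ∀ t : ℝ,
    HasDerivAt p
      (q • E t (x t) +
        cross ((Real.sqrt (m ^ 2 * c ^ 2 + sq3 (p t)))⁻¹ • p t) (q • B t (x t))) t ∧
    HasDerivAt x ((c / Real.sqrt (m ^ 2 * c ^ 2 + sq3 (p t))) • p t) t

/-- Position as a function of the light-like coordinate `ξ`. -/
def xhat (x : ℝ → Fin 3 → ℝ) (tinv : ℝ → ℝ) (ξ : ℝ) : Fin 3 → ℝ := x (tinv ξ)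

/-- Dimensionless momentum `u = p/(mc)` as a function of `ξ`. -/
def uhat (m c : ℝ) (p : ℝ → Fin 3 → ℝ) (tinv : ℝ → ℝ) (ξ : ℝ) : Fin 3 → ℝ :=
  (m * c)⁻¹ • p (tinv ξ)

/-- Lorentz factor `γ = √(1+‖u‖²)` as a function of `ξ`. -/
def gammahat (m c : ℝ) (p : ℝ → Fin 3 → ℝ) (tinv : ℝ → ℝ) (ξ : ℝ) : ℝ :=
  Real.sqrt (1 + sq3 (uhat m c p tinv ξ))

/-- Light-like relativistic factor `s = γ − u³` as a function of `ξ`. -/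
def shat (m c : ℝ) (p : ℝ → Fin 3 → ℝ) (tinv : ℝ → ℝ) (ξ : ℝ) : ℝ :=
  gammahat m c p tinv ξ - uhat m c p tinv ξ 2

/-! The magnetic force is orthogonal to the velocity, so it does no work: `d(γmc²)/dt = q E·v`.
Since `E_s = −∇A_s⁰`, its power `−q ∇A_s⁰·v` is exactly `−d(q A_s⁰(x))/dt`, hence
`dH/dt = q ε⊥·v = q (ε¹v¹ + ε²v²)`. The light-front time `ξ = ct − x³` has `dξ/dt = c − v³ > 0`,
so `t̂` is differentiable with derivative `1/(c − v³)`; dividing `dH/dt` and `dxⁱ/dt` by it gives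
the formula in `ξ`, and where `ε⊥` vanishes `Ĥ` has zero derivative. -/

open Set Filter Topology Matrix Function

lemma cross_eq_crossProduct (a b : Fin 3 → ℝ) : cross a b = a ⨯₃ b := rfl

lemma sq3_eq_sum (v : Fin 3 → ℝ) : sq3 v = ∑ i, v i ^ 2 := by
  rw [sq3, Fin.sum_univ_three]

lemma sq3_smul (k : ℝ) (v : Fin 3 → ℝ) : sq3 (k • v) = k ^ 2 * sq3 v := by
  simp only [sq3, Pi.smul_apply, smul_eq_mul]; ring

lemma HasDerivAt.sq3 {p : ℝ → Fin 3 → ℝ} {p' : Fin 3 → ℝ} {t : ℝ} (h : HasDerivAt p p' t) :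
    HasDerivAt (fun s => sq3 (p s)) (2 * (p t ⬝ᵥ p')) t := by
  have hi := hasDerivAt_pi.1 h
  refine ((((hi 0).pow 2).add ((hi 1).pow 2)).add ((hi 2).pow 2)).congr_deriv ?_
  simp only [vec3_dotProduct, Nat.cast_ofNat]
  ring

lemma ContinuousLinearMap.apply_eq_dotProduct {ι : Type*} [Fintype ι] [DecidableEq ι]
    (φ : (ι → ℝ) →L[ℝ] ℝ) (v : ι → ℝ) : φ v = (fun i => φ (Pi.single i 1)) ⬝ᵥ v := by
  conv_lhs => rw [← Finset.univ_sum_single v]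
  simp only [map_sum, dotProduct, mul_comm]
  refine Finset.sum_congr rfl fun i _ => ?_
  rw [← smul_eq_mul, ← map_smul, ← Pi.single_smul', smul_eq_mul, mul_one]

lemma sq_mul_sq_add_sq3_pos {m c : ℝ} (hm : m ≠ 0) (hc : c ≠ 0) (P : Fin 3 → ℝ) :
    0 < m ^ 2 * c ^ 2 + sq3 P := by
  unfold sq3; positivity

/-- `γmc²`, rest energy included. -/
def kineticEnergy (m c : ℝ) (P : Fin 3 → ℝ) : ℝ := c * √(m ^ 2 * c ^ 2 + sq3 P)

def velocity (m c : ℝ) (P : Fin 3 → ℝ) : Fin 3 → ℝ := (c / √(m ^ 2 * c ^ 2 + sq3 P)) • P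

lemma velocity_apply_lt {m c : ℝ} (hm : m ≠ 0) (hc : 0 < c) (P : Fin 3 → ℝ) (i : Fin 3) :
    velocity m c P i < c := by
  have hR := sq_mul_sq_add_sq3_pos hm hc.ne' P
  have hPi : P i < √(m ^ 2 * c ^ 2 + sq3 P) := by
    have hle : P i ^ 2 ≤ sq3 P := by
      rw [sq3_eq_sum]
      exact Finset.single_le_sum (fun j _ => sq_nonneg (P j)) (Finset.mem_univ i)
    have hmc : 0 < m ^ 2 * c ^ 2 := by positivity
    exact Real.lt_sqrt_of_sq_lt (by linarith)
  rw [velocity, Pi.smul_apply, smul_eq_mul, div_mul_eq_mul_div, div_lt_iff₀ (Real.sqrt_pos.2 hR)]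
  exact mul_lt_mul_of_pos_left hPi hc

lemma mul_sq_mul_gammahat {m c : ℝ} (hmc : 0 < m * c) (p : ℝ → Fin 3 → ℝ) (tinv : ℝ → ℝ)
    (ξ : ℝ) : m * c ^ 2 * gammahat m c p tinv ξ = kineticEnergy m c (p (tinv ξ)) := by
  have hscale : m ^ 2 * c ^ 2 + sq3 (p (tinv ξ)) = (m * c) ^ 2 * (1 + sq3 (uhat m c p tinv ξ)) := by
    rw [uhat, sq3_smul, inv_pow, mul_add, mul_one, ← mul_assoc, mul_inv_cancel₀ (by positivity),
      one_mul, mul_pow]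
  rw [kineticEnergy, gammahat, hscale, Real.sqrt_mul (by positivity), Real.sqrt_sq hmc.le]
  ring

section Lorentz

variable {m c q : ℝ} {E B : ℝ → (Fin 3 → ℝ) → Fin 3 → ℝ} {x p : ℝ → Fin 3 → ℝ}

theorem IsLorentzSolution.hasDerivAt_kineticEnergy (hsol : IsLorentzSolution m c q E B x p)
    (hm : m ≠ 0) (hc : c ≠ 0) (t : ℝ) :
    HasDerivAt (fun s => kineticEnergy m c (p s)) (q * (E t (x t) ⬝ᵥ velocity m c (p t))) t := by
  have hR := sq_mul_sq_add_sq3_pos hm hc (p t)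
  have hcross : p t ⬝ᵥ cross ((√(m ^ 2 * c ^ 2 + sq3 (p t)))⁻¹ • p t) (q • B t (x t)) = 0 := by
    simp [cross_eq_crossProduct, dotProduct_smul]
  refine (((hsol t).1.sq3.const_add (m ^ 2 * c ^ 2)).sqrt hR.ne').const_mul c |>.congr_deriv ?_
  rw [dotProduct_add, hcross, add_zero, velocity, dotProduct_smul, dotProduct_smul, dotProduct_comm,
    smul_eq_mul, smul_eq_mul]
  field_simp

theorem IsLorentzSolution.hasDerivAt_energy (hsol : IsLorentzSolution m c q E B x p)
    (hm : m ≠ 0) (hc : c ≠ 0) {Ew : ℝ → (Fin 3 → ℝ) → Fin 3 → ℝ} {A : (Fin 3 → ℝ) → ℝ}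
    (hA : Differentiable ℝ A)
    (hE : ∀ t y, E t y = Ew t y + fun i => -(fderiv ℝ A y (Pi.single i 1))) (t : ℝ) :
    HasDerivAt (fun s => kineticEnergy m c (p s) + q * A (x s))
      (q * (Ew t (x t) ⬝ᵥ velocity m c (p t))) t := by
  have hAx : HasDerivAt (fun s => A (x s)) (fderiv ℝ A (x t) (velocity m c (p t))) t :=
    (hA (x t)).hasFDerivAt.comp_hasDerivAt t (hsol t).2
  refine ((hsol.hasDerivAt_kineticEnergy hm hc t).add (hAx.const_mul q)).congr_deriv ?_
  have hgrad : (fun i => -(fderiv ℝ A (x t) (Pi.single i 1)))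
      = -fun i => fderiv ℝ A (x t) (Pi.single i 1) := rfl
  rw [hE, add_dotProduct, hgrad, neg_dotProduct, ContinuousLinearMap.apply_eq_dotProduct]
  ring

theorem IsLorentzSolution.hasDerivAt_lightFront (hsol : IsLorentzSolution m c q E B x p)
    (t : ℝ) : HasDerivAt (fun s => c * s - x s 2) (c - velocity m c (p t) 2) t :=
  ((hasDerivAt_id t).const_mul c |>.congr_deriv (mul_one c)).sub (hasDerivAt_pi.1 (hsol t).2 2)

end Lorentz

theorem hasDerivAt_of_leftInverse_of_deriv_pos {f g f' : ℝ → ℝ}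
    (hf : ∀ t, HasDerivAt f (f' t) t) (hf' : ∀ t, 0 < f' t) (hgf : LeftInverse g f) (t : ℝ) :
    HasDerivAt g (f' t)⁻¹ (f t) := by
  have hmono : StrictMono f := strictMono_of_hasDerivAt_pos hf hf'
  have hcont : Continuous f := continuous_iff_continuousAt.2 fun t => (hf t).continuousAt
  have hrange : range f ∈ 𝓝 (f t) := by
    refine mem_of_superset (Ioo_mem_nhds (hmono (sub_one_lt t)) (hmono (lt_add_one t))) ?_
    exact (intermediate_value_Ioo (by linarith) hcont.continuousOn).trans (image_subset_range _ _)
  have hg : ContinuousAt g (f t) := by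
    refine continuousAt_of_monotoneOn_of_image_mem_nhds ?_ hrange ?_
    · rintro _ ⟨a, rfl⟩ _ ⟨b, rfl⟩ hab
      rw [hgf a, hgf b]
      exact hmono.le_iff_le.1 hab
    · rw [← range_comp, hgf.comp_eq_id, range_id]
      exact univ_mem
  refine HasDerivAt.of_local_left_inverse hg (by rw [hgf t]; exact hf t) (hf' t).ne' ?_
  filter_upwards [hrange] with y ⟨s, hs⟩
  rw [← hs, hgf s]

theorem eq_of_forall_hasDerivAt_zero_uIcc {F : ℝ → ℝ} {a b : ℝ}
    (h : ∀ ζ ∈ uIcc a b, HasDerivAt F 0 ζ) : F a = F b := by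
  have hconst := constant_of_has_deriv_right_zero (a := min a b) (b := max a b)
    (fun ζ hζ => (h ζ hζ).continuousAt.continuousWithinAt)
    (fun ζ hζ => (h ζ (Ico_subset_Icc_self hζ)).hasDerivWithinAt)
  rw [hconst a left_mem_uIcc, hconst b right_mem_uIcc]

theorem stmt_5_general (m c q : ℝ) (hm : 0 < m) (hc : 0 < c)
    (eps : ℝ → Fin 3 → ℝ) (hepsz : ∀ ξ : ℝ, eps ξ 2 = 0)
    (As0 : (Fin 3 → ℝ) → ℝ) (hAs0 : ContDiff ℝ 1 As0)
    (E B : ℝ → (Fin 3 → ℝ) → (Fin 3 → ℝ))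
    (hE : ∀ (t : ℝ) (y : Fin 3 → ℝ),
      E t y = eps (c * t - y 2) + fun i : Fin 3 => -(fderiv ℝ As0 y (Pi.single i 1)))
    (x p : ℝ → Fin 3 → ℝ)
    (hsol : IsLorentzSolution m c q E B x p)
    (tinv : ℝ → ℝ) (htinv : ∀ t : ℝ, tinv (c * t - x t 2) = t) :
    (∀ t : ℝ,
      HasDerivAt (fun ξ : ℝ => m * c ^ 2 * gammahat m c p tinv ξ + q * As0 (xhat x tinv ξ))
        (q * (deriv (fun η : ℝ => xhat x tinv η 0) (c * t - x t 2) *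
                eps (c * t - x t 2) 0 +
              deriv (fun η : ℝ => xhat x tinv η 1) (c * t - x t 2) *
                eps (c * t - x t 2) 1))
        (c * t - x t 2)) ∧
    ∀ t₁ t₂ : ℝ,
      (∀ ζ ∈ Set.uIcc (c * t₁ - x t₁ 2) (c * t₂ - x t₂ 2), eps ζ = 0) →
      m * c ^ 2 * gammahat m c p tinv (c * t₁ - x t₁ 2) +
          q * As0 (xhat x tinv (c * t₁ - x t₁ 2)) =
        m * c ^ 2 * gammahat m c p tinv (c * t₂ - x t₂ 2) +
          q * As0 (xhat x tinv (c * t₂ - x t₂ 2)) := by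
  have hξ := hsol.hasDerivAt_lightFront
  have hξpos t : 0 < c - velocity m c (p t) 2 := sub_pos.2 (velocity_apply_lt hm.ne' hc _ _)
  have htinv' := hasDerivAt_of_leftInverse_of_deriv_pos hξ hξpos htinv
  have hxhat t (i : Fin 3) : HasDerivAt (fun η => xhat x tinv η i)
      (velocity m c (p t) i * (c - velocity m c (p t) 2)⁻¹) (c * t - x t 2) :=
    (hasDerivAt_pi.1 (hsol t).2 i).comp_of_eq _ (htinv' t) (htinv t).symm
  set Hhat := fun ξ : ℝ => m * c ^ 2 * gammahat m c p tinv ξ + q * As0 (xhat x tinv ξ)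
  have hHhat t : HasDerivAt Hhat
      (q * (eps (c * t - x t 2) ⬝ᵥ velocity m c (p t)) * (c - velocity m c (p t) 2)⁻¹)
      (c * t - x t 2) := by
    simp only [Hhat, mul_sq_mul_gammahat (mul_pos hm hc), xhat]
    exact (hsol.hasDerivAt_energy hm.ne' hc.ne' (Ew := fun t y => eps (c * t - y 2))
      (hAs0.differentiable one_ne_zero) hE t).comp_of_eq _ (htinv' t) (htinv t).symm
  refine ⟨fun t => (hHhat t).congr_deriv ?_, fun t₁ t₂ hvanish => ?_⟩
  · rw [(hxhat t 0).deriv, (hxhat t 1).deriv, vec3_dotProduct, hepsz]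
    ring
  · refine eq_of_forall_hasDerivAt_zero_uIcc (F := Hhat) fun ζ hζ => ?_
    have hcont : Continuous fun s => c * s - x s 2 :=
      continuous_iff_continuousAt.2 fun t => (hξ t).continuousAt
    obtain ⟨s, -, rfl⟩ := intermediate_value_uIcc hcont.continuousOn hζ
    simpa [hvanish _ hζ] using hHhat s

/-- For the split field `E = ε⊥(ct−z) + E_s`, `B = k×ε⊥(ct−z) + B_s`
with electrostatic `E_s = −∇A_s⁰`, the energy `Ĥ(ξ) = mc²γ̂(ξ) + qA_s⁰(x̂(ξ))`
satisfies `Ĥ'(ξ) = q[(x̂¹)'ε¹(ξ) + (x̂²)'ε²(ξ)]`; in particular `Ĥ` is constant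
on any interval where `ε⊥` vanishes identically. -/
theorem stmt_5 (m c q : ℝ) (hm : 0 < m) (hc : 0 < c)
    (eps : ℝ → Fin 3 → ℝ) (heps : Continuous eps) (hepsz : ∀ ξ : ℝ, eps ξ 2 = 0)
    (As0 : (Fin 3 → ℝ) → ℝ) (hAs0 : ContDiff ℝ 1 As0)
    (Bs : (Fin 3 → ℝ) → Fin 3 → ℝ) (hBs : Continuous Bs)
    (E B : ℝ → (Fin 3 → ℝ) → (Fin 3 → ℝ))
    (hE : ∀ (t : ℝ) (y : Fin 3 → ℝ),
      E t y = eps (c * t - y 2) + fun i : Fin 3 => -(fderiv ℝ As0 y (Pi.single i 1)))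
    (hB : ∀ (t : ℝ) (y : Fin 3 → ℝ),
      B t y = cross ![0, 0, 1] (eps (c * t - y 2)) + Bs y)
    (x p : ℝ → Fin 3 → ℝ) (hxC : ContDiff ℝ 1 x) (hpC : ContDiff ℝ 1 p)
    (hsol : IsLorentzSolution m c q E B x p)
    (tinv : ℝ → ℝ) (htinv : ∀ t : ℝ, tinv (c * t - x t 2) = t) :
    (∀ t : ℝ,
      HasDerivAt (fun ξ : ℝ => m * c ^ 2 * gammahat m c p tinv ξ + q * As0 (xhat x tinv ξ))
        (q * (deriv (fun η : ℝ => xhat x tinv η 0) (c * t - x t 2) *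
                eps (c * t - x t 2) 0 +
              deriv (fun η : ℝ => xhat x tinv η 1) (c * t - x t 2) *
                eps (c * t - x t 2) 1))
        (c * t - x t 2)) ∧
    ∀ t₁ t₂ : ℝ,
      (∀ ζ ∈ Set.uIcc (c * t₁ - x t₁ 2) (c * t₂ - x t₂ 2), eps ζ = 0) →
      m * c ^ 2 * gammahat m c p tinv (c * t₁ - x t₁ 2) +
          q * As0 (xhat x tinv (c * t₁ - x t₁ 2)) =
        m * c ^ 2 * gammahat m c p tinv (c * t₂ - x t₂ 2) +
          q * As0 (xhat x tinv (c * t₂ - x t₂ 2)) :=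
  stmt_5_general m c q hm hc eps hepsz As0 hAs0 E B hE x p hsol tinv htinv
end
end

section
/- Let m, c > 0, q ∈ ℝ, let ε⊥ : ℝ → ℝ² be continuous and integrable, and set α⊥(ξ) := −∫_{−∞}^{ξ} ε⊥(ζ)dζ. Fix s₀ > 0, K⊥ ∈ ℝ², z₀ ∈ ℝ, x₀⊥ ∈ ℝ², ξ₀ ∈ ℝ, and define on ℝ: û⊥(ξ) := (q/(mc²))·(K⊥ − α⊥(ξ)), ŝ(ξ) := s₀, γ̂(ξ) := (1 + ‖û⊥(ξ)‖² + s₀²)/(2s₀), û³(ξ) := γ̂(ξ) − s₀, ẑ(ξ) := z₀ + ((1 − s₀²)/(2s₀²))·(ξ − ξ₀) + ∫_{ξ₀}^{ξ} ‖û⊥(ζ)‖²/(2s₀²) dζ, x̂⊥(ξ) := x₀⊥ + ∫_{ξ₀}^{ξ} û⊥(ζ)/s₀ dζ. Then these functions satisfy: γ̂(ξ) = √(1 + ‖û⊥(ξ)‖² + û³(ξ)²); (x̂⊥)'(ξ) = û⊥(ξ)/ŝ(ξ); ẑ'(ξ) = (1 + ‖û⊥(ξ)‖²)/(2ŝ(ξ)²)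 − 1/2; ŝ'(ξ) = 0; and mc²·(û⊥)'(ξ) = q·ε⊥(ξ) at every point where ε⊥ is continuous. That is, they solve the ξ-parametrized equations of motion of a charge in the pure plane travelling wave E(t,x) = ε⊥(ct−x³), B(t,x) = k × ε⊥(ct−x³) with zero static fields. -/
/-!
The fundamental theorem of calculus on `(-∞, ξ]` gives `α⊥' = -ε⊥`, so `û⊥` is differentiable
with `mc² û⊥' = q ε⊥`; in particular `û⊥` is continuous, and `x̂⊥`, `ẑ` are differentiated by the
fundamental theorem of calculus once more. The mass-shell relation is algebra: for
`2 s₀ γ̂ = 1 + ‖û⊥‖² + s₀²` one has `γ̂² - (γ̂ - s₀)² = 2 s₀ γ̂ - s₀² = 1 + ‖û⊥‖²`.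
-/

open MeasureTheory Set

theorem hasDerivAt_integral_Iic {E : Type*} [NormedAddCommGroup E] [NormedSpace ℝ E]
    [CompleteSpace E] {f : ℝ → E} (hf : Integrable f) {ξ : ℝ} (hξ : ContinuousAt f ξ) :
    HasDerivAt (fun η => ∫ ζ in Iic η, f ζ) (f ξ) ξ := by
  have hsplit : (fun η => ∫ ζ in Iic η, f ζ) =
      fun η => (∫ ζ in Iic ξ, f ζ) + ∫ ζ in ξ..η, f ζ := by
    ext η
    rw [← intervalIntegral.integral_Iic_sub_Iic hf.integrableOn hf.integrableOn]
    abel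
  rw [hsplit]
  exact (intervalIntegral.integral_hasDerivAt_right hf.intervalIntegrable
    hf.aestronglyMeasurable.stronglyMeasurableAtFilter hξ).const_add _

theorem lightFront_gamma_eq_sqrt {s a : ℝ} (hs : 0 < s) (ha : 0 ≤ a) :
    (1 + a + s ^ 2) / (2 * s) = √(1 + a + ((1 + a + s ^ 2) / (2 * s) - s) ^ 2) := by
  have hsq : 1 + a + ((1 + a + s ^ 2) / (2 * s) - s) ^ 2 = ((1 + a + s ^ 2) / (2 * s)) ^ 2 := by
    field_simp
    ring
  rw [hsq, Real.sqrt_sq (by positivity)]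

/-- The explicit functions `û⊥ = (q/(mc²))(K⊥ − α⊥)`, `ŝ ≡ s₀`,
`γ̂ = (1+‖û⊥‖²+s₀²)/(2s₀)`, `û³ = γ̂ − s₀`,
`ẑ(ξ) = z₀ + ((1−s₀²)/(2s₀²))(ξ−ξ₀) + ∫_{ξ₀}^ξ ‖û⊥‖²/(2s₀²)`,
`x̂⊥(ξ) = x₀⊥ + ∫_{ξ₀}^ξ û⊥/s₀` solve the ξ-parametrized equations of motion of a
charge in a pure plane travelling wave with zero static fields:
`γ̂ = √(1+‖û⊥‖²+(û³)²)`, `(x̂⊥)' = û⊥/ŝ`, `ẑ' = (1+‖û⊥‖²)/(2ŝ²) − 1/2`, `ŝ' = 0`,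
`mc²(û⊥)' = qε⊥(ξ)`. -/
theorem stmt_10 (m c q : ℝ) (hm : 0 < m) (hc : 0 < c)
    (eps : ℝ → EuclideanSpace ℝ (Fin 2)) (heps : Continuous eps) (hepsi : Integrable eps)
    (alpha : ℝ → EuclideanSpace ℝ (Fin 2))
    (halpha : ∀ ξ : ℝ, alpha ξ = -∫ ζ in Set.Iic ξ, eps ζ)
    (s₀ : ℝ) (hs₀ : 0 < s₀) (K : EuclideanSpace ℝ (Fin 2)) (z₀ : ℝ)
    (x₀ : EuclideanSpace ℝ (Fin 2)) (ξ₀ : ℝ)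
    (uperp : ℝ → EuclideanSpace ℝ (Fin 2))
    (huperp : ∀ ξ : ℝ, uperp ξ = (q / (m * c ^ 2)) • (K - alpha ξ))
    (shat : ℝ → ℝ) (hshat : ∀ ξ : ℝ, shat ξ = s₀)
    (gamma : ℝ → ℝ)
    (hgamma : ∀ ξ : ℝ, gamma ξ = (1 + ‖uperp ξ‖ ^ 2 + s₀ ^ 2) / (2 * s₀))
    (u3 : ℝ → ℝ) (hu3 : ∀ ξ : ℝ, u3 ξ = gamma ξ - s₀)
    (zhat : ℝ → ℝ)
    (hzhat : ∀ ξ : ℝ, zhat ξ = z₀ + ((1 - s₀ ^ 2) / (2 * s₀ ^ 2)) * (ξ - ξ₀) +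
      ∫ ζ in ξ₀..ξ, ‖uperp ζ‖ ^ 2 / (2 * s₀ ^ 2))
    (xperp : ℝ → EuclideanSpace ℝ (Fin 2))
    (hxperp : ∀ ξ : ℝ, xperp ξ = x₀ + ∫ ζ in ξ₀..ξ, s₀⁻¹ • uperp ζ) :
    ∀ ξ : ℝ,
      gamma ξ = Real.sqrt (1 + ‖uperp ξ‖ ^ 2 + (u3 ξ) ^ 2) ∧
      HasDerivAt xperp ((shat ξ)⁻¹ • uperp ξ) ξ ∧
      HasDerivAt zhat ((1 + ‖uperp ξ‖ ^ 2) / (2 * (shat ξ) ^ 2) - 1 / 2) ξ ∧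
      HasDerivAt shat 0 ξ ∧
      HasDerivAt (fun η : ℝ => (m * c ^ 2) • uperp η) (q • eps ξ) ξ := by
  have hα : ∀ ξ, HasDerivAt alpha (-eps ξ) ξ := fun ξ => by
    rw [funext halpha]
    exact (hasDerivAt_integral_Iic hepsi heps.continuousAt).neg
  have hu : ∀ ξ, HasDerivAt uperp ((q / (m * c ^ 2)) • eps ξ) ξ := fun ξ => by
    rw [funext huperp]
    simpa only [sub_neg_eq_add, zero_add, neg_neg] using
      ((hα ξ).const_sub K).fun_const_smul (q / (m * c ^ 2))
  have hu_cont : Continuous uperp := continuous_iff_continuousAt.2 fun ξ => (hu ξ).continuousAt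
  intro ξ
  simp only [funext hshat]
  refine ⟨?_, ?_, ?_, hasDerivAt_const ξ s₀, ?_⟩
  · rw [hu3, hgamma]
    exact lightFront_gamma_eq_sqrt hs₀ (sq_nonneg _)
  · rw [funext hxperp]
    exact ((hu_cont.const_smul s₀⁻¹).integral_hasStrictDerivAt ξ₀ ξ).hasDerivAt.const_add x₀
  · have hlin : HasDerivAt (fun η => z₀ + (1 - s₀ ^ 2) / (2 * s₀ ^ 2) * (η - ξ₀))
        ((1 - s₀ ^ 2) / (2 * s₀ ^ 2)) ξ := by
      simpa using (((hasDerivAt_id' ξ).sub_const ξ₀).const_mul _).const_add z₀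
    have hint : HasDerivAt (fun η => ∫ ζ in ξ₀..η, ‖uperp ζ‖ ^ 2 / (2 * s₀ ^ 2))
        (‖uperp ξ‖ ^ 2 / (2 * s₀ ^ 2)) ξ :=
      ((hu_cont.norm.pow 2).div_const _ |>.integral_hasStrictDerivAt ξ₀ ξ).hasDerivAt
    have hrate : (1 + ‖uperp ξ‖ ^ 2) / (2 * s₀ ^ 2) - 1 / 2
        = (1 - s₀ ^ 2) / (2 * s₀ ^ 2) + ‖uperp ξ‖ ^ 2 / (2 * s₀ ^ 2) := by
      field_simp
      ring
    rw [funext hzhat, hrate]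
    exact hlin.fun_add hint
  · have hmc : m * c ^ 2 ≠ 0 := by positivity
    have hforce := (hu ξ).fun_const_smul (m * c ^ 2)
    rwa [smul_smul, mul_div_cancel₀ q hmc] at hforce
end
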